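/- Let G ∈ 𝒢_n^m whose strong component G* is a generalized ∞-digraph ∞[m₁,…,m_t] with common vertex v and with 2 = m₁ = ⋯ = m_s < m_{s+1} ≤ ⋯ ≤ m_t (thus m = Σ_{i=1}^t m_i − t + 1, the vertex v has within-S outdegree t ≥ 2, every other vertex of S has within-S outdegree 1, and c₂(G*) = 2s), and let 0 ≤ α < 1. Then α²(m − 1 + t²) + α²(n − m) + 2s(1−α)² ≤ E_α(G) ≤ α²(n − m + t)² + α²(m − 1) + 2s(1−α)². For 0 < α < 1, the lower bound is attained if and only if every hung tree is an in-tree with root at its vertex of S, and the upper bound is attained if and only if all hung trees are trivial except an out-star of size n−m+1 hung with centre at the common vertex v. -/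

import Mathlib

open Polynomial Matrix Finset

/-- The outdegree of a vertex `v` of the digraph with adjacency matrix `A`. -/
noncomputable def outdeg {V : Type*} [Fintype V] (A : Matrix V V ℝ) (v : V) : ℝ := ∑ w, A v w

/-- The `A_α`-matrix `α·D⁺ + (1-α)·A` of a digraph with adjacency matrix `A`. -/
noncomputable def Aalpha {V : Type*} [Fintype V] [DecidableEq V] (α : ℝ) (A : Matrix V V ℝ) :
    Matrix V V ℝ :=
  α • Matrix.diagonal (outdeg A) + (1 - α) • A

/-- The spectral radius of a real square matrix: the maximum modulus of its complex
eigenvalues (roots of the characteristic polynomial over `ℂ`). -/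
noncomputable def specRad {V : Type*} [Fintype V] [DecidableEq V] (M : Matrix V V ℝ) : ℝ :=
  sSup {x : ℝ | ∃ z : ℂ, (M.map ((↑) : ℝ → ℂ)).charpoly.IsRoot z ∧ ‖z‖ = x}

/-- The `A_α` energy of a digraph: the sum of the squares of the eigenvalues of its
`A_α`-matrix, equivalently `trace (A_α(G)²)`. -/
noncomputable def Ealpha {V : Type*} [Fintype V] [DecidableEq V] (α : ℝ) (A : Matrix V V ℝ) : ℝ :=
  Matrix.trace (Aalpha α A * Aalpha α A)

/-- The outdegree of `s` within the vertex set `S` (the within-`S` outdegree `d*(s)`). -/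
noncomputable def dStar {V : Type*} [Fintype V] (A : Matrix V V ℝ) (S : Finset V) (s : V) : ℝ :=
  ∑ v ∈ S, A s v

/-- The size `n_s` of the fiber `r⁻¹(s)`. -/
def fibCard {V : Type*} [Fintype V] [DecidableEq V] (r : V → V) (s : V) : ℕ :=
  (Finset.univ.filter (fun v => r v = s)).card

/-- The underlying undirected graph of the induced subdigraph on the fiber `r⁻¹(s)`. -/
def fiberGraph {V : Type*} (A : Matrix V V ℝ) (r : V → V) (s : V) :
    SimpleGraph {v : V // r v = s} where
  Adj u w := u ≠ w ∧ (A u.1 w.1 = 1 ∨ A w.1 u.1 = 1)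
  symm := ⟨fun _ _ h => ⟨h.1.symm, h.2.symm⟩⟩
  loopless := ⟨fun _ h => h.1 rfl⟩

/-- The principal submatrix of `A` with rows and columns indexed by `S`. -/
def subm {V : Type*} (A : Matrix V V ℝ) (S : Finset V) :
    Matrix {v : V // v ∈ S} {v : V // v ∈ S} ℝ :=
  A.submatrix (fun x => x.1) (fun x => x.1)

/-- `c₂(G*) = trace(A*²)`, the number of closed walks of length 2 in the strong component. -/
noncomputable def c2star {V : Type*} [Fintype V] [DecidableEq V] (A : Matrix V V ℝ)
    (S : Finset V) : ℝ :=
  Matrix.trace (subm A S * subm A S)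

/-- Membership in the class `𝒢_n^m`: `A` is the adjacency matrix of a digraph of order `n`
with a unique strong component on the vertex set `S` of order `m`, with a directed tree
(the fiber `r⁻¹(s)`) hung on each vertex `s ∈ S`. -/
structure IsGnm {V : Type*} [Fintype V] [DecidableEq V] (A : Matrix V V ℝ) (S : Finset V)
    (r : V → V) (n m : ℕ) : Prop where
  zero_one : ∀ u v, A u v = 0 ∨ A u v = 1
  loopless : ∀ v, A v v = 0
  card_V : Fintype.card V = n
  card_S : S.card = m
  two_le_m : 2 ≤ m
  m_lt_n : m < n
  strong : ∀ u ∈ S, ∀ v ∈ S, Relation.ReflTransGen (fun a b => a ∈ S ∧ b ∈ S ∧ A a b = 1) u v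
  r_mem : ∀ v, r v ∈ S
  r_fix : ∀ s ∈ S, r s = s
  arc_cases : ∀ u v, A u v = 1 → (u ∈ S ∧ v ∈ S) ∨ r u = r v
  fiber_no_symm : ∀ u v, r u = r v → A u v = 1 → A v u = 0
  fiber_tree : ∀ s ∈ S, (fiberGraph A r s).IsTree

/-- Every hung tree is an in-tree with root at its vertex of `S`: inside each fiber the
root has outdegree `0` and every other vertex has outdegree `1`. -/
def InTrees {V : Type*} [Fintype V] [DecidableEq V] (A : Matrix V V ℝ) (S : Finset V)
    (r : V → V) : Prop :=
  (∀ v, v ∉ S → (∑ w ∈ Finset.univ.filter (fun w => r w = r v), A v w) = 1) ∧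
  (∀ s ∈ S, (∑ w ∈ Finset.univ.filter (fun w => r w = s), A s w) = 0)

/-- All hung trees are trivial except the one at `v`, which is an out-star with centre `v`. -/
def OutStarAt {V : Type*} [Fintype V] [DecidableEq V] (A : Matrix V V ℝ) (S : Finset V)
    (r : V → V) (v : V) : Prop :=
  (∀ s ∈ S, s ≠ v → fibCard r s = 1) ∧ (∀ u w, r u = v → A u w = 1 → u = v)

/-- The induced subdigraph of `A` on `S` is the generalized `∞`-digraph `∞[m₁,…,m_t]` with
common vertex `v`: `t ≥ 2` directed cycles of lengths `mseq i ≥ 2` passing through exactly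
one common vertex `v` and otherwise pairwise disjoint, covering `S`. -/
def IsGenInfty {V : Type*} (A : Matrix V V ℝ) (S : Finset V) (v : V) (t : ℕ)
    (mseq : Fin t → ℕ) : Prop :=
  v ∈ S ∧ 2 ≤ t ∧ (∀ i, 2 ≤ mseq i) ∧
  ∃ c : Fin t → ℕ → V,
    (∀ i, c i 0 = v) ∧
    (∀ i, ∀ k l, k < mseq i → l < mseq i → c i k = c i l → k = l) ∧
    (∀ i j, i ≠ j → ∀ k l, k < mseq i → l < mseq j → c i k = c j l → c i k = v) ∧
    (∀ w, w ∈ S ↔ ∃ i, ∃ k < mseq i, c i k = w) ∧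
    (∀ u w, u ∈ S → w ∈ S →
      (A u w = 1 ↔ ∃ i, ∃ k < mseq i, c i k = u ∧ c i ((k + 1) % mseq i) = w))

/-! Since `A` has zero diagonal, `E_α(G) = α² Σ_u d⁺(u)² + (1-α)² tr(A²)`. Only arcs of `G*` can
be reciprocated, and in `∞[m₁,…,m_t]` the reciprocated pairs are exactly the 2-cycles through `v`,
so `tr(A²) = 2s`. Split `d⁺(u) = d(u) + x(u)`, where `d(u)` is the outdegree inside `S` (zero off
`S`) and `x(u)` the outdegree inside the hung tree of `u`; then `d` is `t` at `v` and `1` elsewhere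
on `S`, and `Σ x = Σ_s (n_s - 1) = n - m` because every hung tree has `n_s - 1` arcs. Both bounds
come from expanding `Σ (d + x)²` termwise: `(d + x)² ≥ d² + x` for integral `x ≥ 0`, with equality
iff `x = 0`, or `x = 1` and `d = 0` (in-trees); and `(d + x)² ≤ d² + 2tx + x·Σx`, with equality iff
`x = 0`, or `d = t` and `x = Σx` (a single out-star at `v`). -/

theorem Finset.sum_eq_card_filter_eq_one {ι : Type*} (s : Finset ι) (f : ι → ℝ)
    (hf : ∀ i ∈ s, f i = 0 ∨ f i = 1) : ∑ i ∈ s, f i = #{i ∈ s | f i = 1} := by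
  rw [card_filter, Nat.cast_sum]
  refine sum_congr rfl fun i hi => ?_
  rcases hf i hi with h | h <;> simp [h]

theorem Finset.sum_sum_eq_row_add_col {ι M : Type*} [Fintype ι] [DecidableEq ι]
    [AddCommMonoid M] (f : ι → ι → M) (a : ι) (hf : ∀ i j, i ≠ a → j ≠ a → f i j = 0)
    (haa : f a a = 0) : ∑ i, ∑ j, f i j = ∑ j, f a j + ∑ i, f i a := by
  have hrest : ∑ i, ∑ j ∈ univ.erase a, f i j = ∑ j, f a j := by
    rw [sum_eq_single a (fun i _ hi => sum_eq_zero fun j hj =>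
      hf i j hi (ne_of_mem_erase hj)) (by simp), sum_erase _ haa]
  calc ∑ i, ∑ j, f i j = ∑ i, (f i a + ∑ j ∈ univ.erase a, f i j) :=
        sum_congr rfl fun i _ => (add_sum_erase _ _ (mem_univ a)).symm
    _ = ∑ j, f a j + ∑ i, f i a := by rw [sum_add_distrib, hrest, add_comm]

theorem Ealpha_eq {V : Type*} [Fintype V] [DecidableEq V] (α : ℝ) (A : Matrix V V ℝ)
    (hA : ∀ v, A v v = 0) :
    Ealpha α A = α ^ 2 * ∑ u, outdeg A u ^ 2 + (1 - α) ^ 2 * trace (A * A) := by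
  have hDA : trace (diagonal (outdeg A) * A) = 0 := by simp [trace, hA]
  have hAD : trace (A * diagonal (outdeg A)) = 0 := by simp [trace, hA]
  simp only [Ealpha, Aalpha, add_mul, mul_add, smul_mul_smul_comm, trace_add, trace_smul,
    diagonal_mul_diagonal, trace_diagonal, hDA, hAD, smul_eq_mul, sq]
  ring

theorem sq_add_le_sq_add {d x : ℝ} (hd : 0 ≤ d) (hx : x = 0 ∨ 1 ≤ x) :
    d ^ 2 + x ≤ (d + x) ^ 2 := by
  rcases hx with rfl | hx
  · simp
  · nlinarith

theorem sq_add_eq_sq_add_iff {d x : ℝ} (hd : 0 ≤ d) (hx : x = 0 ∨ 1 ≤ x) :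
    (d + x) ^ 2 = d ^ 2 + x ↔ x = 0 ∨ (x = 1 ∧ d = 0) := by
  rcases hx with rfl | hx
  · simp
  · have hfac : (d + x) ^ 2 - (d ^ 2 + x) = x * (2 * d + (x - 1)) := by ring
    constructor
    · intro h
      have : 2 * d + (x - 1) = 0 :=
        (mul_eq_zero.1 (by linarith : x * (2 * d + (x - 1)) = 0)).resolve_left (by linarith)
      right; constructor <;> linarith
    · rintro (h | ⟨rfl, rfl⟩)
      · linarith
      · ring

theorem sq_add_le_sq_add_mul {d x T X : ℝ} (hd : d ≤ T) (hx : 0 ≤ x) (hX : x ≤ X) :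
    (d + x) ^ 2 ≤ d ^ 2 + 2 * T * x + x * X := by
  nlinarith

theorem sq_add_eq_sq_add_mul_iff {d x T X : ℝ} (hd : d ≤ T) (hx : 0 ≤ x) (hX : x ≤ X) :
    (d + x) ^ 2 = d ^ 2 + 2 * T * x + x * X ↔ x = 0 ∨ (d = T ∧ x = X) := by
  have hfac : d ^ 2 + 2 * T * x + x * X - (d + x) ^ 2 = x * (2 * (T - d) + (X - x)) := by ring
  constructor
  · intro h
    refine (mul_eq_zero.1 (by linarith : x * (2 * (T - d) + (X - x)) = 0)).imp_right fun h' => ?_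
    constructor <;> linarith
  · rintro (rfl | ⟨rfl, rfl⟩) <;> ring

section SumSquares

variable {ι : Type*} [Fintype ι]

theorem sum_sq_add_le_sum_sq_add (d x : ι → ℝ) (hd : ∀ i, 0 ≤ d i)
    (hx : ∀ i, x i = 0 ∨ 1 ≤ x i) : ∑ i, d i ^ 2 + ∑ i, x i ≤ ∑ i, (d i + x i) ^ 2 := by
  rw [← sum_add_distrib]
  exact sum_le_sum fun i _ => sq_add_le_sq_add (hd i) (hx i)

theorem sum_sq_add_eq_iff (d x : ι → ℝ) (hd : ∀ i, 0 ≤ d i) (hx : ∀ i, x i = 0 ∨ 1 ≤ x i) :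
    ∑ i, (d i + x i) ^ 2 = ∑ i, d i ^ 2 + ∑ i, x i ↔ ∀ i, x i = 0 ∨ (x i = 1 ∧ d i = 0) := by
  rw [← sum_add_distrib, eq_comm, sum_eq_sum_iff_of_le fun i _ => sq_add_le_sq_add (hd i) (hx i)]
  simp only [mem_univ, forall_const, eq_comm (a := d _ ^ 2 + x _),
    sq_add_eq_sq_add_iff (hd _) (hx _)]

theorem sum_sq_add_mul_sum_eq (d x : ι → ℝ) (T : ℝ) :
    ∑ i, (d i ^ 2 + 2 * T * x i + x i * ∑ j, x j)
      = ∑ i, d i ^ 2 + 2 * T * ∑ i, x i + (∑ i, x i) ^ 2 := by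
  rw [sum_add_distrib, sum_add_distrib, ← mul_sum, ← sum_mul, sq]

theorem sum_sq_add_le_sum_sq_add_sq_sum (d x : ι → ℝ) (T : ℝ) (hd : ∀ i, d i ≤ T)
    (hx : ∀ i, 0 ≤ x i) :
    ∑ i, (d i + x i) ^ 2 ≤ ∑ i, d i ^ 2 + 2 * T * ∑ i, x i + (∑ i, x i) ^ 2 := by
  rw [← sum_sq_add_mul_sum_eq]
  exact sum_le_sum fun i _ =>
    sq_add_le_sq_add_mul (hd i) (hx i) (single_le_sum (fun j _ => hx j) (mem_univ i))

theorem sum_sq_add_eq_sum_sq_add_sq_sum_iff (d x : ι → ℝ) (T : ℝ) (hd : ∀ i, d i ≤ T)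
    (hx : ∀ i, 0 ≤ x i) :
    ∑ i, (d i + x i) ^ 2 = ∑ i, d i ^ 2 + 2 * T * ∑ i, x i + (∑ i, x i) ^ 2 ↔
      ∀ i, x i = 0 ∨ (d i = T ∧ x i = ∑ j, x j) := by
  have hle : ∀ i, x i ≤ ∑ j, x j := fun i => single_le_sum (fun j _ => hx j) (mem_univ i)
  rw [← sum_sq_add_mul_sum_eq,
    sum_eq_sum_iff_of_le fun i _ => sq_add_le_sq_add_mul (hd i) (hx i) (hle i)]
  simp only [mem_univ, forall_const, sq_add_eq_sq_add_mul_iff (hd _) (hx _) (hle _)]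

end SumSquares

structure InftyCycles {V : Type*} (A : Matrix V V ℝ) (S : Finset V) (v : V) (t : ℕ)
    (mseq : Fin t → ℕ) (c : Fin t → ℕ → V) : Prop where
  two_le : ∀ i, 2 ≤ mseq i
  start : ∀ i, c i 0 = v
  inj : ∀ i, ∀ k l, k < mseq i → l < mseq i → c i k = c i l → k = l
  disjoint : ∀ i j, i ≠ j → ∀ k l, k < mseq i → l < mseq j → c i k = c j l → c i k = v
  mem_iff : ∀ w, w ∈ S ↔ ∃ i, ∃ k < mseq i, c i k = w
  adj_iff : ∀ u w, u ∈ S → w ∈ S →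
    (A u w = 1 ↔ ∃ i, ∃ k < mseq i, c i k = u ∧ c i ((k + 1) % mseq i) = w)

theorem IsGenInfty.exists_inftyCycles {V : Type*} {A : Matrix V V ℝ} {S : Finset V} {v : V}
    {t : ℕ} {mseq : Fin t → ℕ} (h : IsGenInfty A S v t mseq) :
    ∃ c, InftyCycles A S v t mseq c :=
  let ⟨_, _, h2, c, h0, hinj, hdisj, hmem, hadj⟩ := h
  ⟨c, h2, h0, hinj, hdisj, hmem, hadj⟩

namespace InftyCycles

variable {V : Type*} {A : Matrix V V ℝ} {S : Finset V} {v : V}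
  {t : ℕ} {mseq : Fin t → ℕ} {c : Fin t → ℕ → V}

theorem mem (hc : InftyCycles A S v t mseq c) {i : Fin t} {k : ℕ} (hk : k < mseq i) :
    c i k ∈ S :=
  (hc.mem_iff _).2 ⟨i, k, hk, rfl⟩

theorem eq_zero_of_eq_center (hc : InftyCycles A S v t mseq c) {i : Fin t} {k : ℕ}
    (hk : k < mseq i) (h : c i k = v) : k = 0 :=
  hc.inj i k 0 hk (by linarith [hc.two_le i]) (h.trans (hc.start i).symm)

theorem one_ne_center (hc : InftyCycles A S v t mseq c) (i : Fin t) : c i 1 ≠ v :=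
  fun h => one_ne_zero (hc.eq_zero_of_eq_center (by linarith [hc.two_le i]) h)

theorem one_injective (hc : InftyCycles A S v t mseq c) : Function.Injective (c · 1) := by
  intro i j h
  by_contra hij
  have h1 := hc.two_le i
  have h2 := hc.two_le j
  exact hc.one_ne_center i (hc.disjoint i j hij 1 1 (by omega) (by omega) h)

theorem adj_center_one (hc : InftyCycles A S v t mseq c) (i : Fin t) : A v (c i 1) = 1 := by
  have h2 := hc.two_le i
  refine (hc.adj_iff _ _ (hc.start i ▸ hc.mem (by omega)) (hc.mem (by omega))).2
    ⟨i, 0, by omega, hc.start i, ?_⟩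
  rw [Nat.mod_eq_of_lt (by omega)]

theorem adj_center_iff (hc : InftyCycles A S v t mseq c) {w : V} (hv : v ∈ S) (hw : w ∈ S) :
    A v w = 1 ↔ ∃ i, c i 1 = w := by
  rw [hc.adj_iff v w hv hw]
  constructor
  · rintro ⟨i, k, hk, hki, hnext⟩
    obtain rfl := hc.eq_zero_of_eq_center hk hki
    exact ⟨i, by rwa [Nat.mod_eq_of_lt (by linarith [hc.two_le i])] at hnext⟩
  · rintro ⟨i, rfl⟩
    exact (hc.adj_iff v _ hv hw).1 (hc.adj_center_one i)

theorem adj_iff_of_ne_center (hc : InftyCycles A S v t mseq c) {i : Fin t} {k : ℕ}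
    (hk : k < mseq i) (hv : c i k ≠ v) {w : V} (hw : w ∈ S) :
    A (c i k) w = 1 ↔ w = c i ((k + 1) % mseq i) := by
  rw [hc.adj_iff _ w (hc.mem hk) hw]
  constructor
  · rintro ⟨j, l, hl, hlk, rfl⟩
    obtain rfl : j = i := by
      by_contra hji
      exact hv (hlk ▸ hc.disjoint j i hji l k hl hk hlk)
    rw [hc.inj j l k hl hk hlk]
  · rintro rfl
    exact ⟨i, k, hk, rfl, rfl⟩

theorem dStar_center [Fintype V] [DecidableEq V] (hc : InftyCycles A S v t mseq c) (hv : v ∈ S)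
    (h01 : ∀ u w, A u w = 0 ∨ A u w = 1) : dStar A S v = t := by
  have hfilter : {w ∈ S | A v w = 1} = univ.image (c · 1) := by
    ext w
    simp only [mem_filter, mem_image, mem_univ, true_and]
    exact ⟨fun ⟨hw, hvw⟩ => (hc.adj_center_iff hv hw).1 hvw,
      fun ⟨i, hi⟩ => ⟨hi ▸ hc.mem (by linarith [hc.two_le i]), hi ▸ hc.adj_center_one i⟩⟩
  rw [dStar, sum_eq_card_filter_eq_one _ _ fun w _ => h01 v w, hfilter,
    card_image_of_injective _ hc.one_injective, card_univ, Fintype.card_fin]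

theorem dStar_of_ne_center [Fintype V] [DecidableEq V] (hc : InftyCycles A S v t mseq c)
    (h01 : ∀ u w, A u w = 0 ∨ A u w = 1) {u : V} (hu : u ∈ S) (huv : u ≠ v) :
    dStar A S u = 1 := by
  obtain ⟨i, k, hk, rfl⟩ := (hc.mem_iff u).1 hu
  have hfilter : {w ∈ S | A (c i k) w = 1} = {c i ((k + 1) % mseq i)} := by
    ext w
    simp only [mem_filter, mem_singleton]
    constructor
    · rintro ⟨hw, hadj⟩
      exact (hc.adj_iff_of_ne_center hk huv hw).1 hadj
    · rintro rfl
      have hnext := hc.mem (Nat.mod_lt (k + 1) (by linarith [hc.two_le i] : 0 < mseq i))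
      exact ⟨hnext, (hc.adj_iff_of_ne_center hk huv hnext).2 rfl⟩
  rw [dStar, sum_eq_card_filter_eq_one _ _ fun w _ => h01 _ w, hfilter, card_singleton,
    Nat.cast_one]

theorem adj_one_center_iff (hc : InftyCycles A S v t mseq c) (i : Fin t) :
    A (c i 1) v = 1 ↔ mseq i = 2 := by
  have h2 := hc.two_le i
  have hv : v ∈ S := hc.start i ▸ hc.mem (by omega)
  rw [hc.adj_iff_of_ne_center (by omega) (hc.one_ne_center i) hv]
  constructor
  · intro h
    have h0 := hc.eq_zero_of_eq_center (Nat.mod_lt _ (by omega)) h.symm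
    by_contra hne
    rw [Nat.mod_eq_of_lt (by omega)] at h0
    omega
  · intro h
    rw [h, Nat.mod_self, hc.start]

theorem eq_center_of_adj_of_adj (hc : InftyCycles A S v t mseq c) {u w : V} (hu : u ∈ S)
    (hw : w ∈ S) (huw : A u w = 1) (hwu : A w u = 1) : u = v ∨ w = v := by
  by_contra! huv
  obtain ⟨i, k, hk, rfl⟩ := (hc.mem_iff u).1 hu
  have hm := hc.two_le i
  have hwk := (hc.adj_iff_of_ne_center hk huv.1 hw).1 huw
  have hk1 : k + 1 < mseq i := by
    by_contra h
    rw [show k + 1 = mseq i by omega, Nat.mod_self, hc.start] at hwk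
    exact huv.2 hwk
  rw [Nat.mod_eq_of_lt hk1] at hwk
  subst hwk
  have hkw := hc.inj i _ _ hk (Nat.mod_lt _ (by omega))
    ((hc.adj_iff_of_ne_center hk1 huv.2 hu).1 hwu)
  have hk0 : k ≠ 0 := fun h => huv.1 (h ▸ hc.start i)
  rcases Nat.lt_or_ge (k + 1 + 1) (mseq i) with h | h
  · rw [Nat.mod_eq_of_lt h] at hkw
    omega
  · rw [show k + 1 + 1 = mseq i by omega, Nat.mod_self] at hkw
    exact hk0 hkw

theorem sum_adj_center_mul_adj [Fintype V] [DecidableEq V] (hc : InftyCycles A S v t mseq c)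
    (h01 : ∀ u w, A u w = 0 ∨ A u w = 1)
    (hsymm : ∀ u w, A u w = 1 → A w u = 1 → u ∈ S ∧ w ∈ S) :
    ∑ w, A v w * A w v = #{i | mseq i = 2} := by
  have hsupp : ∀ w ∉ univ.image (c · 1), A v w * A w v = 0 := by
    intro w hw
    rcases h01 v w with h | h
    · rw [h, zero_mul]
    rcases h01 w v with h' | h'
    · rw [h', mul_zero]
    obtain ⟨i, hi⟩ := (hc.adj_center_iff (hsymm v w h h').1 (hsymm v w h h').2).1 h
    exact absurd (mem_image.2 ⟨i, mem_univ _, hi⟩) hw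
  rw [← sum_subset (subset_univ _) fun w _ hw => hsupp w hw,
    sum_image fun i _ j _ h => hc.one_injective h,
    sum_eq_card_filter_eq_one _ _ fun i _ => by
      rw [hc.adj_center_one, one_mul]; exact h01 _ _]
  simp_rw [hc.adj_center_one, one_mul, hc.adj_one_center_iff]

theorem trace_mul_self [Fintype V] [DecidableEq V] (hc : InftyCycles A S v t mseq c)
    (h01 : ∀ u w, A u w = 0 ∨ A u w = 1)
    (hsymm : ∀ u w, A u w = 1 → A w u = 1 → u ∈ S ∧ w ∈ S) :
    trace (A * A) = 2 * #{i | mseq i = 2} := by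
  have hsupp : ∀ u w, u ≠ v → w ≠ v → A u w * A w u = 0 := by
    intro u w hu hw
    rcases h01 u w with h | h
    · rw [h, zero_mul]
    rcases h01 w u with h' | h'
    · rw [h', mul_zero]
    obtain ⟨huS, hwS⟩ := hsymm u w h h'
    exact ((hc.eq_center_of_adj_of_adj huS hwS h h').elim hu hw).elim
  have hloop : A v v * A v v = 0 := by
    rcases h01 v v with h | h
    · rw [h, zero_mul]
    obtain ⟨i, hi⟩ := (hc.adj_center_iff (hsymm v v h h).1 (hsymm v v h h).1).1 h
    exact (hc.one_ne_center i hi).elim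
  simp only [trace, diag_apply, mul_apply]
  rw [sum_sum_eq_row_add_col _ v hsupp hloop]
  simp_rw [mul_comm (A _ v), hc.sum_adj_center_mul_adj h01 hsymm]
  ring

end InftyCycles

noncomputable def fiberOutdeg {V : Type*} [Fintype V] [DecidableEq V] (A : Matrix V V ℝ)
    (r : V → V) (u : V) : ℝ :=
  ∑ w ∈ univ.filter (fun w => r w = r u), A u w

noncomputable def coreOutdeg {V : Type*} [Fintype V] [DecidableEq V] (A : Matrix V V ℝ)
    (S : Finset V) (u : V) : ℝ :=
  if u ∈ S then dStar A S u else 0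

namespace IsGnm

variable {V : Type*} [Fintype V] [DecidableEq V] {A : Matrix V V ℝ} {S : Finset V}
  {r : V → V} {n m : ℕ} {v : V} {t : ℕ} {mseq : Fin t → ℕ}

theorem adj_nonneg (hG : IsGnm A S r n m) (u w : V) : 0 ≤ A u w := by
  rcases hG.zero_one u w with h | h <;> simp [h]

theorem adj_eq_zero (hG : IsGnm A S r n m) {u w : V} (hS : ¬(u ∈ S ∧ w ∈ S))
    (hr : r u ≠ r w) : A u w = 0 :=
  (hG.zero_one u w).resolve_right fun h => (hG.arc_cases u w h).elim hS hr

theorem mem_of_adj_of_adj (hG : IsGnm A S r n m) {u w : V} (huw : A u w = 1)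
    (hwu : A w u = 1) : u ∈ S ∧ w ∈ S :=
  (hG.arc_cases u w huw).resolve_right fun hr => by
    simp [hG.fiber_no_symm u w hr huw] at hwu

theorem fiberOutdeg_nonneg (hG : IsGnm A S r n m) (u : V) : 0 ≤ fiberOutdeg A r u :=
  sum_nonneg fun w _ => hG.adj_nonneg u w

theorem fiberOutdeg_eq_zero_or_one_le (hG : IsGnm A S r n m) (u : V) :
    fiberOutdeg A r u = 0 ∨ 1 ≤ fiberOutdeg A r u := by
  rw [fiberOutdeg, sum_eq_card_filter_eq_one _ _ fun w _ => hG.zero_one u w]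
  exact_mod_cast (Nat.eq_zero_or_pos _).imp_right id

theorem outdeg_eq (hG : IsGnm A S r n m) (u : V) :
    outdeg A u = coreOutdeg A S u + fiberOutdeg A r u := by
  set F := univ.filter (fun w => r w = r u)
  by_cases hu : u ∈ S
  · have hinter : ∑ w ∈ S ∩ F, A u w = 0 := sum_eq_zero fun w hw => by
      obtain ⟨hwS, hwF⟩ := mem_inter.1 hw
      rw [show w = u by rw [← hG.r_fix w hwS, (mem_filter.1 hwF).2, hG.r_fix u hu],
        hG.loopless]
    rw [coreOutdeg, if_pos hu, dStar, fiberOutdeg, outdeg]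
    calc ∑ w, A u w = ∑ w ∈ S ∪ F, A u w :=
          (sum_subset (subset_univ _) fun w _ hw => hG.adj_eq_zero
            (fun h => hw (mem_union_left _ h.2))
            fun h => hw (mem_union_right _ (mem_filter.2 ⟨mem_univ _, h.symm⟩))).symm
      _ = ∑ w ∈ S ∪ F, A u w + ∑ w ∈ S ∩ F, A u w := by rw [hinter, add_zero]
      _ = ∑ w ∈ S, A u w + ∑ w ∈ F, A u w := sum_union_inter
  · rw [coreOutdeg, if_neg hu, zero_add, outdeg, fiberOutdeg]
    exact (sum_subset (subset_univ F) fun w _ hw =>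
      hG.adj_eq_zero (fun h => hu h.1) fun h => hw (mem_filter.2 ⟨mem_univ _, h.symm⟩)).symm

theorem sum_fiber_adj (hG : IsGnm A S r n m) {s : V} (hs : s ∈ S) :
    ∑ u ∈ univ.filter (fun u => r u = s), ∑ w ∈ univ.filter (fun w => r w = s), A u w
      = (fibCard r s : ℝ) - 1 := by
  classical
  set G := fiberGraph A r s
  have hadj : ∀ u w : {v // r v = s}, (if G.Adj u w then 1 else 0 : ℝ) = A u w + A w u := by
    intro u w
    by_cases huw : u = w
    · simp [huw, G, fiberGraph, hG.loopless]
    have hr : r u.1 = r w.1 := u.2.trans w.2.symm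
    rcases hG.zero_one u w with h | h <;> rcases hG.zero_one w u with h' | h'
    case inr.inr => simp [hG.fiber_no_symm _ _ hr h] at h'
    all_goals simp [G, fiberGraph, huw, h, h']
  have hdeg : ∀ u, (G.degree u : ℝ) = ∑ w : {v // r v = s}, (A u w + A w u) := by
    intro u
    rw [← G.card_neighborFinset_eq_degree, G.neighborFinset_eq_filter, card_filter, Nat.cast_sum]
    push_cast
    exact sum_congr rfl fun w _ => hadj u w
  have htree := (hG.fiber_tree s hs).card_edgeFinset
  rw [Fintype.card_subtype] at htree
  have hsum : (2 * #G.edgeFinset : ℝ)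
      = 2 * ∑ u : {v // r v = s}, ∑ w : {v // r v = s}, A u w := by
    rw [← Nat.cast_ofNat, ← Nat.cast_mul, ← G.sum_degrees_eq_twice_card_edges, Nat.cast_sum]
    simp_rw [hdeg, sum_add_distrib]
    rw [sum_comm (s := univ) (t := univ) (f := fun (u w : {v // r v = s}) => A w u)]
    ring
  have hcard : (#G.edgeFinset : ℝ) + 1 = fibCard r s := by exact_mod_cast htree
  have hmem : ∀ x, x ∈ univ.filter (fun u => r u = s) ↔ r x = s := by simp
  rw [sum_subtype _ hmem]
  simp_rw [sum_subtype _ hmem]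
  linarith

theorem sum_fiberOutdeg_fiber (hG : IsGnm A S r n m) {s : V} (hs : s ∈ S) :
    ∑ u ∈ univ.filter (fun u => r u = s), fiberOutdeg A r u = (fibCard r s : ℝ) - 1 := by
  rw [← hG.sum_fiber_adj hs]
  exact sum_congr rfl fun u hu => by rw [fiberOutdeg, (mem_filter.1 hu).2]

theorem sum_fiberOutdeg (hG : IsGnm A S r n m) : ∑ u, fiberOutdeg A r u = (n : ℝ) - m := by
  have hcard : ∑ s ∈ S, (fibCard r s : ℝ) = n := by
    rw [← hG.card_V, ← card_univ, card_eq_sum_card_fiberwise fun u _ => hG.r_mem u]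
    push_cast [fibCard]
    rfl
  rw [← sum_fiberwise_of_maps_to (fun u _ => hG.r_mem u),
    sum_congr rfl fun s hs => hG.sum_fiberOutdeg_fiber hs, sum_sub_distrib, hcard, sum_const,
    hG.card_S, nsmul_one]

theorem inTrees_iff (hG : IsGnm A S r n m) :
    InTrees A S r ↔ (∀ u ∈ S, fiberOutdeg A r u = 0) ∧ ∀ u ∉ S, fiberOutdeg A r u = 1 := by
  refine and_comm.trans (and_congr (forall₂_congr fun u hu => ?_) Iff.rfl)
  rw [fiberOutdeg, hG.r_fix u hu]

theorem outStarAt_iff (hG : IsGnm A S r n m) {v : V} (hv : v ∈ S) :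
    OutStarAt A S r v ↔ ∀ u ≠ v, fiberOutdeg A r u = 0 := by
  constructor
  · rintro ⟨hfib, hstar⟩ u huv
    refine sum_eq_zero fun w hw => (hG.zero_one u w).resolve_right fun huw => ?_
    by_cases hru : r u = v
    · exact huv (hstar u w hru huw)
    · have huw' : u = w := card_le_one.1 (hfib _ (hG.r_mem u) hru).le u (by simp) w hw
      simp [huw', hG.loopless] at huw
  · intro h
    refine ⟨fun s hs hsv => ?_, fun u w hru huw => ?_⟩
    · have hzero : ∑ u ∈ univ.filter (fun u => r u = s), fiberOutdeg A r u = 0 :=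
        sum_eq_zero fun u hu => h u fun huv => hsv <| by
          rw [← (mem_filter.1 hu).2, huv, hG.r_fix v hv]
      have := hG.sum_fiberOutdeg_fiber hs
      exact_mod_cast (by linarith : (fibCard r s : ℝ) = 1)
    · by_contra huv
      have huS : u ∉ S := fun huS => huv (hG.r_fix u huS ▸ hru)
      have hrw : r w = r u := ((hG.arc_cases u w huw).resolve_left fun h => huS h.1).symm
      have hle : A u w ≤ fiberOutdeg A r u :=
        single_le_sum (fun w _ => hG.adj_nonneg u w) (mem_filter.2 ⟨mem_univ _, hrw⟩)
      linarith [h u huv]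

theorem fiberOutdeg_eq_one_of_le_one (hG : IsGnm A S r n m)
    (hS : ∀ u ∈ S, fiberOutdeg A r u = 0) (hle : ∀ u ∉ S, fiberOutdeg A r u ≤ 1) :
    ∀ u ∉ S, fiberOutdeg A r u = 1 := by
  have hcompl : ∑ u ∈ Sᶜ, fiberOutdeg A r u = (#Sᶜ : ℝ) := by
    rw [← add_zero (∑ u ∈ Sᶜ, _), ← sum_eq_zero hS, sum_compl_add_sum, hG.sum_fiberOutdeg,
      card_compl, hG.card_V, hG.card_S, Nat.cast_sub hG.m_lt_n.le]
  have hzero : ∑ u ∈ Sᶜ, (1 - fiberOutdeg A r u) = 0 := by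
    rw [sum_sub_distrib, hcompl, sum_const, nsmul_one, sub_self]
  intro u hu
  have := (sum_eq_zero_iff_of_nonneg fun w hw => sub_nonneg.2 (hle w (mem_compl.1 hw))).1
    hzero u (mem_compl.2 hu)
  linarith

theorem coreOutdeg_nonneg (hG : IsGnm A S r n m) (u : V) : 0 ≤ coreOutdeg A S u := by
  unfold coreOutdeg
  split_ifs
  exacts [sum_nonneg fun w _ => hG.adj_nonneg u w, le_rfl]

theorem coreOutdeg_eq_ite (hG : IsGnm A S r n m) (hinf : IsGenInfty A S v t mseq) (u : V) :
    coreOutdeg A S u = if u = v then (t : ℝ) else if u ∈ S then 1 else 0 := by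
  obtain ⟨c, hc⟩ := hinf.exists_inftyCycles
  by_cases huv : u = v
  · rw [if_pos huv, coreOutdeg, huv, if_pos hinf.1, hc.dStar_center hinf.1 hG.zero_one]
  · rw [if_neg huv, coreOutdeg]
    split_ifs with hu
    · exact hc.dStar_of_ne_center hG.zero_one hu huv
    · rfl

theorem coreOutdeg_le (hG : IsGnm A S r n m) (hinf : IsGenInfty A S v t mseq) (u : V) :
    coreOutdeg A S u ≤ t := by
  have ht : (2 : ℝ) ≤ t := by exact_mod_cast hinf.2.1
  rw [hG.coreOutdeg_eq_ite hinf]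
  split_ifs <;> linarith

theorem sum_sq_coreOutdeg (hG : IsGnm A S r n m) (hinf : IsGenInfty A S v t mseq) :
    ∑ u, coreOutdeg A S u ^ 2 = (m : ℝ) - 1 + (t : ℝ) ^ 2 := by
  have hsplit : ∀ u, coreOutdeg A S u ^ 2
      = (if u = v then (t : ℝ) ^ 2 - 1 else 0) + if u ∈ S then 1 else 0 := fun u => by
    rw [hG.coreOutdeg_eq_ite hinf]
    by_cases huv : u = v
    · simp [huv, hinf.1]
    · simp [huv]
  simp only [hsplit, sum_add_distrib, sum_ite_eq', mem_univ, if_true, sum_boole, filter_univ_mem,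
    hG.card_S]
  ring

theorem sum_sq_outdeg_ge (hG : IsGnm A S r n m) (hinf : IsGenInfty A S v t mseq) :
    (m : ℝ) - 1 + (t : ℝ) ^ 2 + ((n : ℝ) - m) ≤ ∑ u, outdeg A u ^ 2 := by
  simp_rw [hG.outdeg_eq]
  rw [← hG.sum_sq_coreOutdeg hinf, ← hG.sum_fiberOutdeg]
  exact sum_sq_add_le_sum_sq_add _ _ hG.coreOutdeg_nonneg hG.fiberOutdeg_eq_zero_or_one_le

theorem sum_sq_outdeg_eq_iff_inTrees (hG : IsGnm A S r n m) (hinf : IsGenInfty A S v t mseq) :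
    ∑ u, outdeg A u ^ 2 = (m : ℝ) - 1 + (t : ℝ) ^ 2 + ((n : ℝ) - m) ↔ InTrees A S r := by
  have hcore := hG.coreOutdeg_eq_ite hinf
  have ht : (2 : ℝ) ≤ t := by exact_mod_cast hinf.2.1
  simp_rw [hG.outdeg_eq]
  rw [← hG.sum_sq_coreOutdeg hinf, ← hG.sum_fiberOutdeg,
    sum_sq_add_eq_iff _ _ hG.coreOutdeg_nonneg hG.fiberOutdeg_eq_zero_or_one_le, hG.inTrees_iff]
  constructor
  · intro h
    have hS : ∀ u ∈ S, fiberOutdeg A r u = 0 := fun u hu => (h u).resolve_right fun ⟨_, hd⟩ => by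
      rw [hcore] at hd
      split_ifs at hd <;> linarith
    refine ⟨hS, hG.fiberOutdeg_eq_one_of_le_one hS fun u _ => ?_⟩
    rcases h u with h | h
    · exact h.le.trans zero_le_one
    · exact h.1.le
  · rintro ⟨hS, hSc⟩ u
    by_cases hu : u ∈ S
    · exact Or.inl (hS u hu)
    · refine Or.inr ⟨hSc u hu, ?_⟩
      rw [hcore, if_neg (fun h : u = v => hu (h ▸ hinf.1)), if_neg hu]

theorem sum_sq_outdeg_le (hG : IsGnm A S r n m) (hinf : IsGenInfty A S v t mseq) :
    ∑ u, outdeg A u ^ 2 ≤ ((n : ℝ) - m + t) ^ 2 + ((m : ℝ) - 1) := by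
  simp_rw [hG.outdeg_eq]
  calc ∑ u, (coreOutdeg A S u + fiberOutdeg A r u) ^ 2
      ≤ ∑ u, coreOutdeg A S u ^ 2 + 2 * t * ∑ u, fiberOutdeg A r u
          + (∑ u, fiberOutdeg A r u) ^ 2 :=
        sum_sq_add_le_sum_sq_add_sq_sum _ _ _ (hG.coreOutdeg_le hinf) hG.fiberOutdeg_nonneg
    _ = ((n : ℝ) - m + t) ^ 2 + ((m : ℝ) - 1) := by
        rw [hG.sum_sq_coreOutdeg hinf, hG.sum_fiberOutdeg]; ring

theorem sum_sq_outdeg_eq_iff_outStarAt (hG : IsGnm A S r n m) (hinf : IsGenInfty A S v t mseq) :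
    ∑ u, outdeg A u ^ 2 = ((n : ℝ) - m + t) ^ 2 + ((m : ℝ) - 1) ↔ OutStarAt A S r v := by
  have hcore := hG.coreOutdeg_eq_ite hinf
  have ht : (2 : ℝ) ≤ t := by exact_mod_cast hinf.2.1
  have hrhs : ((n : ℝ) - m + t) ^ 2 + ((m : ℝ) - 1) = ∑ u, coreOutdeg A S u ^ 2
      + 2 * t * ∑ u, fiberOutdeg A r u + (∑ u, fiberOutdeg A r u) ^ 2 := by
    rw [hG.sum_sq_coreOutdeg hinf, hG.sum_fiberOutdeg]; ring
  simp_rw [hG.outdeg_eq]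
  rw [hrhs, sum_sq_add_eq_sum_sq_add_sq_sum_iff _ _ _ (hG.coreOutdeg_le hinf)
    hG.fiberOutdeg_nonneg, hG.outStarAt_iff hinf.1]
  constructor
  · intro h u huv
    refine (h u).resolve_right fun ⟨hd, _⟩ => ?_
    rw [hcore, if_neg huv] at hd
    split_ifs at hd <;> linarith
  · intro h u
    by_cases huv : u = v
    · subst huv
      exact Or.inr ⟨by rw [hcore, if_pos rfl],
        (sum_eq_single u (fun w _ => h w) (by simp)).symm⟩
    · exact Or.inl (h u huv)

end IsGnm

theorem card_filter_eq_two {t s : ℕ} (mseq : Fin t → ℕ) (hs : s ≤ t)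
    (h2 : ∀ i : Fin t, (i : ℕ) < s → mseq i = 2) (h3 : ∀ i : Fin t, s ≤ (i : ℕ) → 3 ≤ mseq i) :
    #{i | mseq i = 2} = s := by
  have hfilter : univ.filter (fun i => mseq i = 2) = univ.filter (fun i : Fin t => i < s) := by
    ext i
    simp only [mem_filter, mem_univ, true_and]
    refine ⟨fun h => ?_, h2 i⟩
    by_contra hi
    have := h3 i (not_lt.1 hi)
    omega
  rw [hfilter, Fin.card_filter_val_lt, min_eq_right hs]

theorem stmt15_general {V : Type*} [Fintype V] [DecidableEq V] (A : Matrix V V ℝ) (S : Finset V)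
    (r : V → V) (n m : ℕ) (hG : IsGnm A S r n m)
    (v : V) (t s : ℕ) (mseq : Fin t → ℕ) (hinf : IsGenInfty A S v t mseq)
    (hs : s ≤ t)
    (h2 : ∀ i : Fin t, (i : ℕ) < s → mseq i = 2)
    (h3 : ∀ i : Fin t, s ≤ (i : ℕ) → 3 ≤ mseq i)
    (α : ℝ) :
    (α ^ 2 * ((m : ℝ) - 1 + (t : ℝ) ^ 2) + α ^ 2 * ((n : ℝ) - m)
        + 2 * (s : ℝ) * (1 - α) ^ 2 ≤ Ealpha α A ∧
      Ealpha α A ≤ α ^ 2 * ((n : ℝ) - m + t) ^ 2 + α ^ 2 * ((m : ℝ) - 1)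
        + 2 * (s : ℝ) * (1 - α) ^ 2) ∧
    (0 < α →
      ((Ealpha α A = α ^ 2 * ((m : ℝ) - 1 + (t : ℝ) ^ 2) + α ^ 2 * ((n : ℝ) - m)
          + 2 * (s : ℝ) * (1 - α) ^ 2 ↔ InTrees A S r) ∧
       (Ealpha α A = α ^ 2 * ((n : ℝ) - m + t) ^ 2 + α ^ 2 * ((m : ℝ) - 1)
          + 2 * (s : ℝ) * (1 - α) ^ 2 ↔ OutStarAt A S r v))) := by
  obtain ⟨c, hc⟩ := hinf.exists_inftyCycles
  have hE : Ealpha α A = α ^ 2 * ∑ u, outdeg A u ^ 2 + 2 * s * (1 - α) ^ 2 := by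
    rw [Ealpha_eq α A hG.loopless, hc.trace_mul_self hG.zero_one fun _ _ => hG.mem_of_adj_of_adj,
      card_filter_eq_two mseq hs h2 h3]
    ring
  rw [hE, ← mul_add, ← mul_add]
  refine ⟨⟨?_, ?_⟩, fun hα => ⟨?_, ?_⟩⟩
  · gcongr
    exact hG.sum_sq_outdeg_ge hinf
  · gcongr
    exact hG.sum_sq_outdeg_le hinf
  · rw [add_left_inj, mul_right_inj' (by positivity)]
    exact hG.sum_sq_outdeg_eq_iff_inTrees hinf
  · rw [add_left_inj, mul_right_inj' (by positivity)]
    exact hG.sum_sq_outdeg_eq_iff_outStarAt hinf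

/-- For `G ∈ 𝒢_n^m` whose strong component is a generalized `∞`-digraph `∞[m₁,…,m_t]`
with common vertex `v` and `2 = m₁ = ⋯ = m_s < m_{s+1} ≤ ⋯ ≤ m_t`,
`α²(m-1+t²) + α²(n-m) + 2s(1-α)² ≤ E_α(G) ≤ α²(n-m+t)² + α²(m-1) + 2s(1-α)²`; for
`0 < α < 1` the lower bound is attained iff all hung trees are in-trees, and the upper
bound iff all hung trees are trivial except an out-star of size `n-m+1` centred at `v`. -/
theorem stmt15 {V : Type*} [Fintype V] [DecidableEq V] (A : Matrix V V ℝ) (S : Finset V)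
    (r : V → V) (n m : ℕ) (hG : IsGnm A S r n m)
    (v : V) (t s : ℕ) (mseq : Fin t → ℕ) (hinf : IsGenInfty A S v t mseq)
    (hmono : Monotone mseq) (hs : s ≤ t)
    (h2 : ∀ i : Fin t, (i : ℕ) < s → mseq i = 2)
    (h3 : ∀ i : Fin t, s ≤ (i : ℕ) → 3 ≤ mseq i)
    (α : ℝ) (hα0 : 0 ≤ α) (hα1 : α < 1) :
    (α ^ 2 * ((m : ℝ) - 1 + (t : ℝ) ^ 2) + α ^ 2 * ((n : ℝ) - m)
        + 2 * (s : ℝ) * (1 - α) ^ 2 ≤ Ealpha α A ∧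
      Ealpha α A ≤ α ^ 2 * ((n : ℝ) - m + t) ^ 2 + α ^ 2 * ((m : ℝ) - 1)
        + 2 * (s : ℝ) * (1 - α) ^ 2) ∧
    (0 < α →
      ((Ealpha α A = α ^ 2 * ((m : ℝ) - 1 + (t : ℝ) ^ 2) + α ^ 2 * ((n : ℝ) - m)
          + 2 * (s : ℝ) * (1 - α) ^ 2 ↔ InTrees A S r) ∧
       (Ealpha α A = α ^ 2 * ((n : ℝ) - m + t) ^ 2 + α ^ 2 * ((m : ℝ) - 1)
          + 2 * (s : ℝ) * (1 - α) ^ 2 ↔ OutStarAt A S r v))) :=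
  stmt15_general A S r n m hG v t s mseq hinf hs h2 h3 α
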